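/- The space of vectors in (ℂ²)^{⊗3} annihilated by the spin-representation image of the explicitly given 14-dimensional Lie algebra g₂ ⊂ so(7) is exactly one-dimensional, spanned by φ = u(1,1,1) + i·u(-1,-1,-1). -/

import Mathlib

open Complex Matrix BigOperators

noncomputable section

/-- The 2×2 identity matrix `E`. -/
def E2 : Matrix (Fin 2) (Fin 2) ℂ := 1

/-- The matrix `T = [[0,-i],[i,0]]`. -/
def Tm : Matrix (Fin 2) (Fin 2) ℂ := !![0, -Complex.I; Complex.I, 0]

/-- The matrix `U = diag(i,-i)`. -/
def Um : Matrix (Fin 2) (Fin 2) ℂ := !![Complex.I, 0; 0, -Complex.I]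

/-- The matrix `V = [[0,i],[i,0]]`. -/
def Vm : Matrix (Fin 2) (Fin 2) ℂ := !![0, Complex.I; Complex.I, 0]

/-- The vector `u(ε) = (1/√2)·(1, -ε·i) ∈ ℂ²`. -/
def uvec (ε : ℂ) : Fin 2 → ℂ := ((Real.sqrt 2 : ℂ))⁻¹ • ![1, -ε * Complex.I]

/-- The basis vector `u(ε_m, …, ε_1) = u(ε_m) ⊗ ⋯ ⊗ u(ε_1)` of `Δ = (ℂ²)^{⊗ m}`,
realized as a function on multi-indices; the index `i = 0` corresponds to the rightmost
tensor factor (i.e. to `ε_1`). -/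
def uB {m : ℕ} (ε : Fin m → ℂ) : (Fin m → Fin 2) → ℂ :=
  fun x => ∏ i, uvec (ε i) (x i)

/-- The `m`-fold Kronecker (tensor) product of 2×2 matrices, as a matrix acting on
`(ℂ²)^{⊗ m}`; the factor `i = 0` is the rightmost one. -/
def tensM {m : ℕ} (M : Fin m → Matrix (Fin 2) (Fin 2) ℂ) :
    Matrix (Fin m → Fin 2) (Fin m → Fin 2) ℂ :=
  Matrix.of fun x y => ∏ i, M i (x i) (y i)

/-- The Clifford representation `Φ` in even dimension `n = 2m` with signs `κ`:
`Φ(e_{2k-1}) = τ_{2k-1}·E^{⊗(m-k)} ⊗ U ⊗ T^{⊗(k-1)}`,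
`Φ(e_{2k})   = τ_{2k}·E^{⊗(m-k)} ⊗ V ⊗ T^{⊗(k-1)}`,
where `τ_j = i` if `κ_j = -1` and `τ_j = 1` if `κ_j = 1`.
Here `j : Fin (2*m)` is the zero-based index, so `j` corresponds to `e_{j+1}`. -/
def PhiEven (m : ℕ) (κ : Fin (2*m) → ℂ) (j : Fin (2*m)) :
    Matrix (Fin m → Fin 2) (Fin m → Fin 2) ℂ :=
  (if κ j = -1 then Complex.I else 1) •
    tensM (fun i => if (i : ℕ) < (j : ℕ)/2 then Tm
      else if (i : ℕ) = (j : ℕ)/2 then (if (j : ℕ) % 2 = 0 then Um else Vm) else E2)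

/-- `Δ⁺`: span of the basis vectors `u(ε_m,…,ε_1)` with `∏ ε_j = 1`. -/
def Dplus (m : ℕ) : Submodule ℂ ((Fin m → Fin 2) → ℂ) :=
  Submodule.span ℂ
    {v | ∃ ε : Fin m → ℂ, (∀ j, ε j = 1 ∨ ε j = -1) ∧ (∏ j, ε j) = 1 ∧ v = uB ε}

/-- `Δ⁻`: span of the basis vectors `u(ε_m,…,ε_1)` with `∏ ε_j = -1`. -/
def Dminus (m : ℕ) : Submodule ℂ ((Fin m → Fin 2) → ℂ) :=
  Submodule.span ℂ
    {v | ∃ ε : Fin m → ℂ, (∀ j, ε j = 1 ∨ ε j = -1) ∧ (∏ j, ε j) = -1 ∧ v = uB ε}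

/-- The odd-dimensional Clifford representation Φ of Cl(7) on (ℂ²)^{⊗3} (first component
of the odd-dimensional construction, all κ_j = 1): Φ(e_k) = Φ₆(e_k) for k ≤ 6 and
Φ(e_7) = i·T⊗T⊗T. Indices are zero-based. -/
def Phi7 (j : Fin 7) : Matrix (Fin 3 → Fin 2) (Fin 3 → Fin 2) ℂ :=
  if h : (j : ℕ) < 6 then PhiEven 3 (fun _ => 1) ⟨(j : ℕ), by omega⟩
  else Complex.I • tensM (fun _ => Tm)

/-- ρ(E_{ij}) = (1/2)·Φ(e_i)·Φ(e_j), zero-based indices. -/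
def rho7 (i j : Fin 7) : Matrix (Fin 3 → Fin 2) (Fin 3 → Fin 2) ℂ :=
  (2⁻¹ : ℂ) • (Phi7 i * Phi7 j)

/-- The spin-representation images of the 14 spanning elements of g₂ ⊂ so(7):
E₁₂-E₃₄, E₁₂-E₅₆, E₁₃+E₂₄, E₁₃-E₆₇, E₁₄-E₂₃, E₁₄-E₅₇, E₁₅+E₂₆, E₁₅+E₄₇, E₁₆-E₂₅,
E₁₆+E₃₇, E₁₇-E₃₆, E₁₇-E₄₅, E₂₇-E₃₅, E₂₇+E₄₆ (translated to zero-based indices). -/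
def g2ops : List (Matrix (Fin 3 → Fin 2) (Fin 3 → Fin 2) ℂ) :=
  [rho7 0 1 - rho7 2 3, rho7 0 1 - rho7 4 5, rho7 0 2 + rho7 1 3, rho7 0 2 - rho7 5 6,
   rho7 0 3 - rho7 1 2, rho7 0 3 - rho7 4 6, rho7 0 4 + rho7 1 5, rho7 0 4 + rho7 3 6,
   rho7 0 5 - rho7 1 4, rho7 0 5 + rho7 2 6, rho7 0 6 - rho7 2 5, rho7 0 6 - rho7 3 4,
   rho7 1 6 - rho7 2 4, rho7 1 6 + rho7 3 5]

/-- The spinor φ = u(1,1,1) + i·u(-1,-1,-1) ∈ (ℂ²)^{⊗3}. -/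
def phiG2 : (Fin 3 → Fin 2) → ℂ :=
  uB (fun _ => (1 : ℂ)) + Complex.I • uB (fun _ => (-1 : ℂ))

/-!
In the basis `u(ε)`, `ε ∈ {±1}³`, of `(ℂ²)^{⊗3}` every `Φ(e_j)` is monomial: `T u(ε) = -ε u(ε)`,
`U u(ε) = i u(-ε)`, `V u(ε) = ε u(-ε)`, so `Φ(e_{2k-1})`, `Φ(e_{2k})` flip the sign `ε_k` and
`Φ(e_7)` is diagonal. Applying the fourteen generators to `φ = u(1,1,1) + i u(-1,-1,-1)` therefore
only produces multiples of a few basis vectors, and their coefficients cancel.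

Conversely, in standard coordinates `φ` is proportional to the vector which is `1` at `000`, `111`
and `-1` elsewhere, and seven coordinates of the equations `ρ(E₁₂ - E₃₄) v = ρ(E₁₂ - E₅₆) v =
ρ(E₁₃ - E₆₇) v = 0` already force `v` to be a multiple of it.
-/

theorem tensM_mul {m : ℕ} (M N : Fin m → Matrix (Fin 2) (Fin 2) ℂ) :
    tensM M * tensM N = tensM (M * N) := by
  ext x y
  simp only [tensM, mul_apply, of_apply, Pi.mul_apply, Finset.prod_univ_sum,
    Fintype.piFinset_univ, Finset.prod_mul_distrib]

theorem tensM_mulVec_prod {m : ℕ} (M : Fin m → Matrix (Fin 2) (Fin 2) ℂ)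
    (w : Fin m → Fin 2 → ℂ) :
    tensM M *ᵥ (fun y => ∏ i, w i (y i)) = fun x => ∏ i, (M i *ᵥ w i) (x i) := by
  funext x
  simp only [mulVec, dotProduct, tensM, of_apply, ← Finset.prod_mul_distrib]
  rw [Finset.prod_univ_sum, Fintype.piFinset_univ]

theorem tensM_mulVec_uB {m : ℕ} (M : Fin m → Matrix (Fin 2) (Fin 2) ℂ) {ε ε' μ : Fin m → ℂ}
    (h : ∀ i, M i *ᵥ uvec (ε i) = μ i • uvec (ε' i)) :
    tensM M *ᵥ uB ε = (∏ i, μ i) • uB ε' := by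
  unfold uB
  rw [tensM_mulVec_prod]
  funext x
  simp only [h, Pi.smul_apply, smul_eq_mul, Finset.prod_mul_distrib]

theorem eq_fin_three {α : Type*} (x : Fin 3 → α) : x = ![x 0, x 1, x 2] := by
  ext i; fin_cases i <;> rfl

theorem sum_fun_fin_three {α M : Type*} [Fintype α] [AddCommMonoid M] (f : (Fin 3 → α) → M) :
    ∑ y, f y = ∑ a, ∑ b, ∑ c, f ![a, b, c] := by
  rw [← (Fin.consEquiv fun _ => α).sum_comp, Fintype.sum_prod_type]
  refine Finset.sum_congr rfl fun a _ => ?_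
  rw [← (Fin.consEquiv fun _ => α).sum_comp, Fintype.sum_prod_type]
  refine Finset.sum_congr rfl fun b _ => ?_
  rw [← (Fin.consEquiv fun _ => α).sum_comp, Fintype.sum_prod_type]
  refine Finset.sum_congr rfl fun c _ => ?_
  rw [Fintype.sum_unique]
  rfl

theorem tensM_mulVec_apply_three (M : Fin 3 → Matrix (Fin 2) (Fin 2) ℂ)
    (v : (Fin 3 → Fin 2) → ℂ) (x : Fin 3 → Fin 2) :
    (tensM M *ᵥ v) x =
      ∑ a, ∑ b, ∑ c, M 0 (x 0) a * M 1 (x 1) b * M 2 (x 2) c * v ![a, b, c] := by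
  simp only [mulVec, dotProduct, tensM, of_apply, sum_fun_fin_three, Fin.prod_univ_three]
  rfl

theorem E2_mulVec (w : Fin 2 → ℂ) : E2 *ᵥ w = (1 : ℂ) • w := by
  rw [E2, one_mulVec, one_smul]

theorem Tm_mulVec_uvec {ε : ℂ} (hε : ε ^ 2 = 1) : Tm *ᵥ uvec ε = (-ε) • uvec ε := by
  rw [uvec, mulVec_smul, smul_comm, Tm]
  congr 1
  simp only [cons_mulVec, vec2_dotProduct', empty_mulVec, smul_vec2, smul_eq_mul]
  refine vec2_eq ?_ ?_
  · linear_combination ε * I_sq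
  · linear_combination (-I) * hε

theorem Um_mulVec_uvec (ε : ℂ) : Um *ᵥ uvec ε = I • uvec (-ε) := by
  rw [uvec, uvec, mulVec_smul, smul_comm, Um]
  congr 1
  simp only [cons_mulVec, vec2_dotProduct', empty_mulVec, smul_vec2, smul_eq_mul]
  refine vec2_eq ?_ ?_ <;> ring

theorem Vm_mulVec_uvec {ε : ℂ} (hε : ε ^ 2 = 1) : Vm *ᵥ uvec ε = ε • uvec (-ε) := by
  rw [uvec, uvec, mulVec_smul, smul_comm, Vm]
  congr 1
  simp only [cons_mulVec, vec2_dotProduct', empty_mulVec, smul_vec2, smul_eq_mul]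
  refine vec2_eq ?_ ?_
  · linear_combination -ε * I_sq
  · linear_combination (-I) * hε

theorem Phi7_zero : Phi7 0 = tensM ![Um, E2, E2] := by
  rw [Phi7, dif_pos (by decide), PhiEven, if_neg (by norm_num), one_smul]
  congr 1; funext i; fin_cases i <;> rfl

theorem Phi7_one : Phi7 1 = tensM ![Vm, E2, E2] := by
  rw [Phi7, dif_pos (by decide), PhiEven, if_neg (by norm_num), one_smul]
  congr 1; funext i; fin_cases i <;> rfl

theorem Phi7_two : Phi7 2 = tensM ![Tm, Um, E2] := by
  rw [Phi7, dif_pos (by decide), PhiEven, if_neg (by norm_num), one_smul]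
  congr 1; funext i; fin_cases i <;> rfl

theorem Phi7_three : Phi7 3 = tensM ![Tm, Vm, E2] := by
  rw [Phi7, dif_pos (by decide), PhiEven, if_neg (by norm_num), one_smul]
  congr 1; funext i; fin_cases i <;> rfl

theorem Phi7_four : Phi7 4 = tensM ![Tm, Tm, Um] := by
  rw [Phi7, dif_pos (by decide), PhiEven, if_neg (by norm_num), one_smul]
  congr 1; funext i; fin_cases i <;> rfl

theorem Phi7_five : Phi7 5 = tensM ![Tm, Tm, Vm] := by
  rw [Phi7, dif_pos (by decide), PhiEven, if_neg (by norm_num), one_smul]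
  congr 1; funext i; fin_cases i <;> rfl

theorem Phi7_six : Phi7 6 = I • tensM ![Tm, Tm, Tm] := by
  rw [Phi7, dif_neg (by decide)]
  rfl

section uBasis

variable {a b c : ℂ}

theorem Phi7_zero_mulVec_uB : Phi7 0 *ᵥ uB ![a, b, c] = I • uB ![-a, b, c] := by
  rw [Phi7_zero, tensM_mulVec_uB (μ := ![I, 1, 1]) (ε' := ![-a, b, c])]
  · simp [Fin.prod_univ_three]
  · intro i; fin_cases i
    exacts [Um_mulVec_uvec a, E2_mulVec _, E2_mulVec _]

theorem Phi7_one_mulVec_uB (ha : a ^ 2 = 1) :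
    Phi7 1 *ᵥ uB ![a, b, c] = a • uB ![-a, b, c] := by
  rw [Phi7_one, tensM_mulVec_uB (μ := ![a, 1, 1]) (ε' := ![-a, b, c])]
  · simp [Fin.prod_univ_three]
  · intro i; fin_cases i
    exacts [Vm_mulVec_uvec ha, E2_mulVec _, E2_mulVec _]

theorem Phi7_two_mulVec_uB (ha : a ^ 2 = 1) :
    Phi7 2 *ᵥ uB ![a, b, c] = (-a * I) • uB ![a, -b, c] := by
  rw [Phi7_two, tensM_mulVec_uB (μ := ![-a, I, 1]) (ε' := ![a, -b, c])]
  · simp [Fin.prod_univ_three]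
  · intro i; fin_cases i
    exacts [Tm_mulVec_uvec ha, Um_mulVec_uvec b, E2_mulVec _]

theorem Phi7_three_mulVec_uB (ha : a ^ 2 = 1) (hb : b ^ 2 = 1) :
    Phi7 3 *ᵥ uB ![a, b, c] = (-a * b) • uB ![a, -b, c] := by
  rw [Phi7_three, tensM_mulVec_uB (μ := ![-a, b, 1]) (ε' := ![a, -b, c])]
  · simp [Fin.prod_univ_three]
  · intro i; fin_cases i
    exacts [Tm_mulVec_uvec ha, Vm_mulVec_uvec hb, E2_mulVec _]

theorem Phi7_four_mulVec_uB (ha : a ^ 2 = 1) (hb : b ^ 2 = 1) :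
    Phi7 4 *ᵥ uB ![a, b, c] = (a * b * I) • uB ![a, b, -c] := by
  rw [Phi7_four, tensM_mulVec_uB (μ := ![-a, -b, I]) (ε' := ![a, b, -c])]
  · simp [Fin.prod_univ_three]
  · intro i; fin_cases i
    exacts [Tm_mulVec_uvec ha, Tm_mulVec_uvec hb, Um_mulVec_uvec c]

theorem Phi7_five_mulVec_uB (ha : a ^ 2 = 1) (hb : b ^ 2 = 1) (hc : c ^ 2 = 1) :
    Phi7 5 *ᵥ uB ![a, b, c] = (a * b * c) • uB ![a, b, -c] := by
  rw [Phi7_five, tensM_mulVec_uB (μ := ![-a, -b, c]) (ε' := ![a, b, -c])]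
  · simp [Fin.prod_univ_three]
  · intro i; fin_cases i
    exacts [Tm_mulVec_uvec ha, Tm_mulVec_uvec hb, Vm_mulVec_uvec hc]

theorem Phi7_six_mulVec_uB (ha : a ^ 2 = 1) (hb : b ^ 2 = 1) (hc : c ^ 2 = 1) :
    Phi7 6 *ᵥ uB ![a, b, c] = (-(a * b * c) * I) • uB ![a, b, c] := by
  rw [Phi7_six, smul_mulVec, tensM_mulVec_uB (μ := ![-a, -b, -c]) (ε' := ![a, b, c]), smul_smul]
  · congr 1
    simp only [Fin.prod_univ_three, cons_val_zero, cons_val_one, cons_val_two, tail_cons,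
      head_cons]
    ring
  · intro i; fin_cases i
    exacts [Tm_mulVec_uvec ha, Tm_mulVec_uvec hb, Tm_mulVec_uvec hc]

end uBasis

theorem phiG2_eq_uB : phiG2 = uB ![1, 1, 1] + I • uB ![-1, -1, -1] := by
  rw [phiG2]
  congr <;> funext i <;> fin_cases i <;> rfl

theorem mulVec_phiG2_eq_zero_of_mem_g2ops {A : Matrix (Fin 3 → Fin 2) (Fin 3 → Fin 2) ℂ}
    (hA : A ∈ g2ops) : A *ᵥ phiG2 = 0 := by
  simp only [g2ops, List.mem_cons, List.not_mem_nil, or_false] at hA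
  rcases hA with rfl | rfl | rfl | rfl | rfl | rfl | rfl | rfl | rfl | rfl | rfl | rfl | rfl | rfl <;>
  · simp only [phiG2_eq_uB, rho7, sub_mulVec, add_mulVec, smul_mulVec, ← mulVec_mulVec,
      mulVec_add, mulVec_smul, Phi7_zero_mulVec_uB, Phi7_one_mulVec_uB, Phi7_two_mulVec_uB,
      Phi7_three_mulVec_uB, Phi7_four_mulVec_uB, Phi7_five_mulVec_uB, Phi7_six_mulVec_uB,
      neg_neg, one_pow, neg_one_sq]
    match_scalars <;> ring_nf <;> simp only [I_sq, I_pow_three] <;> ring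

def signVec : (Fin 3 → Fin 2) → ℂ := fun x => if x 0 = x 1 ∧ x 1 = x 2 then 1 else -1

theorem phiG2_eq_smul_signVec : phiG2 = ((1 + I) / (Real.sqrt 2 : ℂ) ^ 3) • signVec := by
  funext x
  rw [eq_fin_three x]
  generalize x 0 = a, x 1 = b, x 2 = c
  fin_cases a <;> fin_cases b <;> fin_cases c <;>
    simp only [phiG2, uB, uvec, signVec, Pi.add_apply, Pi.smul_apply, smul_eq_mul,
      Fin.prod_univ_three, cons_val_zero, cons_val_one, cons_val, cons_val_fin_one, Fin.isValue,
      Fin.zero_eta, Fin.mk_one, neg_mul, mul_neg, one_mul, mul_one, neg_neg, zero_ne_one,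
      one_ne_zero, and_self, and_true, and_false, ↓reduceIte] <;> ring_nf <;>
    simp only [I_sq, I_pow_three, I_pow_four] <;> ring

theorem eq_smul_signVec_of_mulVec_eq_zero {v : (Fin 3 → Fin 2) → ℂ}
    (h₁ : (rho7 0 1 - rho7 2 3) *ᵥ v = 0) (h₂ : (rho7 0 1 - rho7 4 5) *ᵥ v = 0)
    (h₃ : (rho7 0 2 - rho7 5 6) *ᵥ v = 0) : v = v ![0, 0, 0] • signVec := by
  have e₀ := congrFun h₃ ![0, 0, 0]
  have e₁ := congrFun h₁ ![0, 1, 0]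
  have e₂ := congrFun h₁ ![0, 1, 1]
  have e₃ := congrFun h₁ ![0, 0, 0]
  have e₄ := congrFun h₂ ![0, 0, 0]
  have e₅ := congrFun h₂ ![0, 0, 1]
  have e₆ := congrFun h₂ ![0, 1, 0]
  simp only [rho7, Phi7_zero, Phi7_one, Phi7_two, Phi7_three, Phi7_four, Phi7_five, Phi7_six,
    Matrix.mul_smul, tensM_mul, sub_mulVec, smul_mulVec, Pi.sub_apply, Pi.smul_apply,
    tensM_mulVec_apply_three, Fin.sum_univ_two, Pi.mul_apply, E2, Um, Vm, Tm, one_fin_two,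
    mul_fin_two, of_apply, cons_val_zero, cons_val_one, head_cons, cons_val_two, tail_cons,
    Pi.zero_apply, smul_eq_mul] at e₀ e₁ e₂ e₃ e₄ e₅ e₆
  norm_num at e₀ e₁ e₂ e₃ e₄ e₅ e₆
  have h100 : v ![1, 0, 0] = -v ![0, 0, 0] := by
    linear_combination (-2 * I) * e₀ + (v ![1, 0, 0] + v ![0, 0, 0]) * I_sq
  have h010 : v ![0, 1, 0] = -v ![0, 0, 0] := by linear_combination 2 * e₃ + h100
  have h001 : v ![0, 0, 1] = -v ![0, 0, 0] := by linear_combination 2 * e₄ + h100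
  have h110 : v ![1, 1, 0] = -v ![0, 0, 0] := by linear_combination -2 * e₁
  have h101 : v ![1, 0, 1] = -v ![0, 0, 0] := by linear_combination -2 * e₅
  have h011 : v ![0, 1, 1] = -v ![0, 0, 0] := by linear_combination 2 * e₆ + h110
  have h111 : v ![1, 1, 1] = v ![0, 0, 0] := by linear_combination -2 * e₂ - h001
  funext x
  rw [eq_fin_three x]
  generalize x 0 = a, x 1 = b, x 2 = c
  fin_cases a <;> fin_cases b <;> fin_cases c <;>
    simp [signVec, h100, h010, h001, h110, h101, h011, h111]

/-- the space of vectors of (ℂ²)^{⊗3} annihilated by the spin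
representation of g₂ ⊂ so(7) is exactly the one-dimensional span of
φ = u(1,1,1) + i·u(-1,-1,-1). -/
theorem stmt15 :
    {v : (Fin 3 → Fin 2) → ℂ | ∀ A ∈ g2ops, A.mulVec v = 0} =
    ↑(Submodule.span ℂ ({phiG2} : Set ((Fin 3 → Fin 2) → ℂ))) := by
  ext v
  simp only [Set.mem_ofPred_eq, SetLike.mem_coe, Submodule.mem_span_singleton]
  constructor
  · intro h
    have hv := eq_smul_signVec_of_mulVec_eq_zero (h _ (by simp [g2ops])) (h _ (by simp [g2ops]))
      (h _ (by simp [g2ops]))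
    have hc : (1 + I) / (Real.sqrt 2 : ℂ) ^ 3 ≠ 0 := by
      refine div_ne_zero (fun h => by simpa using congrArg im h) (pow_ne_zero _ ?_)
      exact_mod_cast (Real.sqrt_pos.mpr two_pos).ne'
    refine ⟨v ![0, 0, 0] / ((1 + I) / (Real.sqrt 2 : ℂ) ^ 3), ?_⟩
    rw [phiG2_eq_smul_signVec, smul_smul, div_mul_cancel₀ _ hc, ← hv]
  · rintro ⟨a, rfl⟩ A hA
    rw [mulVec_smul, mulVec_phiG2_eq_zero_of_mem_g2ops hA, smul_zero]
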